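/- Let G be a static graph with n nodes, let G_ℕ be the induced ℕ-periodic graph, and let G_{[−n,n]} be the induced [−n,n]-periodic graph. Then G_ℕ contains an ∞-weight path if and only if either (a) G_{[−n,n]} contains a circuit with positive weight, or (b) G_{[−n,n]} contains no positive-weight circuit and there exist i_1, i_2 ∈ {1,…,n}, s_1 ∈ {1,…,n}, s_2 ∈ {−n,…,−1} such that: there is a path in G from i_1 to i_2; for z ∈ {1,2} there exists a pseudo-circuit in G_{[−n,n]} from node (i_z,0) to node (i_z,s_z), and, denoting by w(i_z,s_z) the largest weight of such pseudo-circuits, the inequality −s_2·w(i_1,s_1) + s_1·w(i_2,s_2) > 0 holds. -/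

import Mathlib

namespace Periodic

/-- An arc of a static graph: a source node, a target node, and a shift. -/
structure Arc (n : ℕ) where
  src : Fin n
  tgt : Fin n
  shift : ℤ
deriving DecidableEq

/-- A static graph on `n` nodes, given by three matrices with entries in `ℚ ∪ {-∞}`. -/
structure StaticGraph (n : ℕ) where
  Mneg : Matrix (Fin n) (Fin n) (WithBot ℚ)
  Mzero : Matrix (Fin n) (Fin n) (WithBot ℚ)
  Mpos : Matrix (Fin n) (Fin n) (WithBot ℚ)

/-- The matrix associated to shift `s` (the all `-∞` matrix if `s ∉ {-1,0,1}`). -/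
def StaticGraph.M {n : ℕ} (G : StaticGraph n) (s : ℤ) : Matrix (Fin n) (Fin n) (WithBot ℚ) :=
  if s = -1 then G.Mneg else if s = 0 then G.Mzero else if s = 1 then G.Mpos
  else Matrix.of fun _ _ => ⊥

/-- `e` is an arc of `G` iff the corresponding matrix entry is not `-∞`. -/
def StaticGraph.IsArc {n : ℕ} (G : StaticGraph n) (e : Arc n) : Prop :=
  G.M e.shift e.tgt e.src ≠ ⊥

/-- The (rational) weight of an arc. -/
def StaticGraph.w {n : ℕ} (G : StaticGraph n) (e : Arc n) : ℚ :=
  WithBot.unbotD 0 (G.M e.shift e.tgt e.src)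

/-- A path in the static graph `G`: a first node together with a compatible list of arcs. -/
structure SPath {n : ℕ} (G : StaticGraph n) where
  first : Fin n
  arcs : List (Arc n)
  valid : ∀ e ∈ arcs, G.IsArc e
  startOk : ∀ e ∈ arcs.head?, e.src = first
  chainOk : arcs.Chain' (fun e f => e.tgt = f.src)

namespace SPath

variable {n : ℕ} {G : StaticGraph n}

/-- The last node of a path. -/
def last (p : SPath G) : Fin n := (p.arcs.getLast?).elim p.first Arc.tgt

/-- The length of a path. -/
def len (p : SPath G) : ℕ := p.arcs.length

/-- The shift of a path. -/
def shift (p : SPath G) : ℤ := (p.arcs.map Arc.shift).sum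

/-- The weight of a path. -/
def weight (p : SPath G) : ℚ := (p.arcs.map G.w).sum

/-- The sum of the shifts of the first `i` arcs of a path. -/
def prefixShift (p : SPath G) (i : ℕ) : ℤ := ((p.arcs.take i).map Arc.shift).sum

/-- The left-shift of a path: the minimum of all prefix sums of arc shifts. -/
def lshift (p : SPath G) : ℤ :=
  Finset.univ.inf' Finset.univ_nonempty
    (fun i : Fin (p.arcs.length + 1) => p.prefixShift i)

/-- A path is a circuit if its first and last nodes coincide. -/
def IsCircuit (p : SPath G) : Prop := p.first = p.last

/-- The sequence of nodes visited by a path. -/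
def nodes (p : SPath G) : List (Fin n) := p.first :: p.arcs.map Arc.tgt

/-- An elementary circuit: a nonempty circuit whose nodes, except the last one,
are pairwise distinct. -/
def IsElemCircuit (p : SPath G) : Prop :=
  p.IsCircuit ∧ p.arcs ≠ [] ∧ p.nodes.dropLast.Nodup

/-- Concatenation of two paths with matching endpoints. -/
def append (p q : SPath G) (h : q.first = p.last) : SPath G where
  first := p.first
  arcs := p.arcs ++ q.arcs
  valid := by
    intro e he
    rcases List.mem_append.mp he with h' | h'
    · exact p.valid e h'
    · exact q.valid e h'
  startOk := by
    intro e he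
    cases hp : p.arcs with
    | nil =>
      rw [hp] at he
      simp only [List.nil_append] at he
      rw [q.startOk e he, h]
      simp [SPath.last, hp]
    | cons a l =>
      rw [hp] at he
      simp only [List.cons_append, List.head?_cons, Option.mem_def, Option.some.injEq] at he
      subst he
      exact p.startOk a (by rw [hp]; rfl)
  chainOk := by
    apply List.IsChain.append p.chainOk q.chainOk
    intro x hx y hy
    have h1 : y.src = q.first := q.startOk y hy
    have hx' : p.arcs.getLast? = some x := hx
    have h2 : p.last = x.tgt := by simp [SPath.last, hx']
    show x.tgt = y.src
    rw [h1, h, h2]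

theorem last_append (p q : SPath G) (h : q.first = p.last) :
    (p.append q h).last = q.last := by
  cases hq : q.arcs with
  | nil =>
    have hql : q.last = q.first := by simp [SPath.last, hq]
    simp [SPath.append, SPath.last, hq, hql, h]
  | cons a l =>
    have hx : (a :: l).getLast? = some ((a :: l).getLast (by simp)) :=
      List.getLast?_eq_some_getLast (by simp)
    simp [SPath.append, SPath.last, hq, List.getLast?_append, hx]

/-- The empty path at node `i`. -/
def nil (G : StaticGraph n) (i : Fin n) : SPath G :=
  ⟨i, [], by simp, by simp, List.isChain_nil⟩

/-- Auxiliary construction for powers of a circuit. -/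
def npowAux (q : SPath G) (h : q.IsCircuit) :
    (x : ℕ) → {r : SPath G // r.first = q.first ∧ r.last = q.first}
  | 0 => ⟨SPath.nil G q.first, rfl, by simp [SPath.last, SPath.nil]⟩
  | x + 1 =>
    let r := npowAux q h x
    ⟨q.append r.1 (r.2.1.trans h), rfl, (last_append q r.1 _).trans r.2.2⟩

/-- The `x`-fold concatenation `q^x` of a circuit `q` with itself. -/
def npow (q : SPath G) (h : q.IsCircuit) (x : ℕ) : SPath G := (npowAux q h x).1

theorem npow_first (q : SPath G) (h : q.IsCircuit) (x : ℕ) :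
    (npow q h x).first = q.first := (npowAux q h x).2.1

theorem npow_last (q : SPath G) (h : q.IsCircuit) (x : ℕ) :
    (npow q h x).last = q.first := (npowAux q h x).2.2

/-- Concatenation of a nonempty list of paths with matching endpoints. -/
def concatChain (p : SPath G) :
    (l : List (SPath G)) → (p :: l).Chain' (fun a b => b.first = a.last) →
      {r : SPath G // r.first = p.first}
  | [], _ => ⟨p, rfl⟩
  | q :: l, h =>
    let rest := concatChain q l (List.isChain_cons_cons.mp h).2
    ⟨p.append rest.1 (rest.2.trans (List.isChain_cons_cons.mp h).1), rfl⟩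

/-- The path `p`, started at shift `k`, visits only shifts belonging to `S`;
i.e., `(p, k)` represents a path of the `S`-periodic graph `G_S`. -/
def shiftsIn (p : SPath G) (k : ℤ) (S : Set ℤ) : Prop :=
  ∀ i ≤ p.arcs.length, k + p.prefixShift i ∈ S

end SPath

/-- The set of positive integers (the paper's `ℕ`). -/
def Spos : Set ℤ := {k | 0 < k}

/-- The set of integers `k` with `-n ≤ k ≤ n`. -/
def Sint (n : ℕ) : Set ℤ := {k | -(n : ℤ) ≤ k ∧ k ≤ (n : ℤ)}

/-- The `S`-periodic graph `G_S` contains an `∞`-weight path: there are nodes `u, v` of `G_S`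
and an infinite sequence of paths of `G_S` from `u` to `v` with strictly increasing weights. -/
def HasInfWeightPath {n : ℕ} (G : StaticGraph n) (S : Set ℤ) : Prop :=
  ∃ u v : Fin n × ℤ, ∃ (p : ℕ → SPath G) (k : ℕ → ℤ),
    (∀ h, (p h).shiftsIn (k h) S) ∧
    (∀ h, ((p h).first, k h) = u ∧ ((p h).last, k h + (p h).shift) = v) ∧
    ∀ h, (p h).weight < (p (h + 1)).weight

/-- The `S`-periodic graph `G_S` contains a circuit with positive weight. -/
def HasPosWeightCircuit {n : ℕ} (G : StaticGraph n) (S : Set ℤ) : Prop :=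
  ∃ (p : SPath G) (k : ℤ), p.shiftsIn k S ∧ p.IsCircuit ∧ p.shift = 0 ∧ 0 < p.weight

end Periodic

namespace Periodic

variable {n : ℕ} {G : StaticGraph n}

/-- The inner nodes of a path: all visited nodes except the first and the last one. -/
def SPath.innerNodes (p : SPath G) : List (Fin n) := (p.nodes.drop 1).dropLast

/-- `p` splits as the concatenation `u q v`. -/
def Splits (p u q v : SPath G) : Prop :=
  p.first = u.first ∧ p.arcs = u.arcs ++ (q.arcs ++ v.arcs) ∧
    q.first = u.last ∧ v.first = q.last

/-- The elementary circuit `q` can be cut out of `p = u q v`: all of its inner nodes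
occur somewhere else in the remaining path `u v`. -/
def Removable (p u q v : SPath G) : Prop :=
  Splits p u q v ∧ q.IsElemCircuit ∧
    ∀ x ∈ q.innerNodes, x ∈ u.nodes ∨ x ∈ v.nodes

/-- One step of the decomposition: cut the removable elementary circuit `q` out of `p`,
obtaining `p₂`. -/
def CutStep (p p₂ q : SPath G) : Prop :=
  ∃ u v, Removable p u q v ∧ p₂.first = u.first ∧ p₂.arcs = u.arcs ++ v.arcs

/-- `IsCPD p p' Q` : `(p', Q)` is a complete path decomposition of `p`, where the
multiset `Q` records the removed elementary circuits with their multiplicities. -/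
inductive IsCPD : SPath G → SPath G → Multiset (SPath G) → Prop
  | done (p : SPath G) (h : ∀ u q v, ¬ Removable p u q v) : IsCPD p p 0
  | step (p p₂ p' q : SPath G) (Q : Multiset (SPath G)) :
      CutStep p p₂ q → IsCPD p₂ p' Q → IsCPD p p' (q ::ₘ Q)

/-- Assumption A: all circuits of the decomposition have nonzero shift, and no two distinct
circuits have both the same source node and the same shift. -/
def AssumptionA (Q : Multiset (SPath G)) : Prop :=
  (∀ q ∈ Q, q.shift ≠ 0) ∧
    ∀ q ∈ Q, ∀ r ∈ Q, q ≠ r → (q.first, q.shift) ≠ (r.first, r.shift)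

/-- `ps` is a factorization of the path `p` into consecutive subpaths. -/
def IsFactorization (p : SPath G) (ps : List (SPath G)) : Prop :=
  ps ≠ [] ∧ ps.Chain' (fun a b => b.first = a.last) ∧
    (∀ q ∈ ps.head?, q.first = p.first) ∧ p.arcs = (ps.map SPath.arcs).flatten

/-- One move of the canonical-path-composition algorithm: a factor which is a circuit with
negative shift is postponed, or a factor which is a circuit with positive shift is
anticipated. -/
inductive MoveStep : List (SPath G) → List (SPath G) → Prop
  | postpone (a b d : List (SPath G)) (c : SPath G) (hc : c.IsCircuit) (hs : c.shift < 0) :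
      MoveStep (a ++ c :: (b ++ d)) (a ++ (b ++ c :: d))
  | anticipate (a b d : List (SPath G)) (c : SPath G) (hc : c.IsCircuit) (hs : 0 < c.shift) :
      MoveStep (a ++ (b ++ c :: d)) (a ++ c :: (b ++ d))

/-- Weights of pseudo-circuits of `G_S` from node `(i, 0)` to node `(i, s)`. -/
def PCWeights (G : StaticGraph n) (S : Set ℤ) (i : Fin n) (s : ℤ) : Set ℚ :=
  {w | ∃ p : SPath G, p.shiftsIn 0 S ∧ p.first = i ∧ p.last = i ∧ p.shift = s ∧ p.weight = w}

/-- The path `r^{(h)} = q₁^{(-s₂)·h} p' q₂^{s₁·h}`. -/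
def rpath (q₁ p' q₂ : SPath G)
    (hc₁ : q₁.IsCircuit) (hc₂ : q₂.IsCircuit)
    (h₁ : p'.first = q₁.last) (h₂ : q₂.first = p'.last) (h : ℕ) : SPath G :=
  (SPath.npow q₁ hc₁ ((-q₂.shift).toNat * h)).append
    (p'.append (SPath.npow q₂ hc₂ (q₁.shift.toNat * h))
      ((SPath.npow_first q₂ hc₂ _).trans h₂))
    ((h₁.trans hc₁.symm).trans (SPath.npow_last q₁ hc₁ _).symm)

/-- `x` is a nonzero solution in `S` which is minimal (componentwise) and has minimal
carrier among nonzero solutions. -/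
def isMinSol {ι : Type*} (S : Set (ι → ℕ)) (x : ι → ℕ) : Prop :=
  x ∈ S ∧ x ≠ 0 ∧
    ∀ y ∈ S, y ≠ x → y ≠ 0 → ¬ y ≤ x ∧ ¬ ({i | y i ≠ 0} ⊂ {i | x i ≠ 0})

/-- Solutions `(y, z) ∈ ℕ₀^m × ℕ₀^(m-1)` of the Diophantine system
`z_l = ∑_{j ≤ l} s_j y_j` (for `l ∈ [1, m-1]`) and `∑_j s_j y_j = 0`. -/
def DioSol (m : ℕ) (s : Fin m → ℤ) : Set (Fin m ⊕ Fin (m - 1) → ℕ) :=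
  {x | (∀ l : Fin (m - 1), (x (Sum.inr l) : ℤ) =
          ∑ j ∈ Finset.univ.filter (fun j : Fin m => (j : ℕ) ≤ (l : ℕ)),
            s j * (x (Sum.inl j) : ℤ)) ∧
       (∑ j : Fin m, s j * (x (Sum.inl j) : ℤ)) = 0}

/-- The candidate minimal solution `x^{(i,j)}`: `y_i = -s_j/g`, `y_j = s_i/g`,
`z_l = s_i·(-s_j)/g` for `l ∈ [i, j-1]`, all other entries `0`, where `g = gcd(s_i, -s_j)`. -/
def dioMinVec (m : ℕ) (s : Fin m → ℤ) (i j : Fin m) : Fin m ⊕ Fin (m - 1) → ℕ :=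
  fun l => match l with
  | Sum.inl a =>
      if a = i then (s j).natAbs / Int.gcd (s i) (s j)
      else if a = j then (s i).natAbs / Int.gcd (s i) (s j)
      else 0
  | Sum.inr a =>
      if (i : ℕ) ≤ (a : ℕ) ∧ (a : ℕ) < (j : ℕ)
      then (s i).natAbs * ((s j).natAbs / Int.gcd (s i) (s j))
      else 0

end Periodic

open Periodic Periodic.SPath

namespace Periodic

variable {n : ℕ} {G : StaticGraph n}

theorem isArc_shift {e : Arc n} (h : G.IsArc e) :
    e.shift = -1 ∨ e.shift = 0 ∨ e.shift = 1 := by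
  by_contra hc
  push_neg at hc
  obtain ⟨h1, h2, h3⟩ := hc
  apply h
  unfold StaticGraph.M
  simp [h1, h2, h3, StaticGraph.IsArc]

theorem isArc_shift_abs {e : Arc n} (h : G.IsArc e) : |e.shift| ≤ 1 := by
  rcases isArc_shift h with h' | h' | h' <;> simp [h']

theorem abs_sum_shifts (l : List (Arc n)) (h : ∀ e ∈ l, |e.shift| ≤ 1) :
    |(l.map Arc.shift).sum| ≤ (l.length : ℤ) := by
  induction l with
  | nil => simp
  | cons a t ih =>
    simp only [List.map_cons, List.sum_cons, List.length_cons]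
    have h1 : |a.shift| ≤ 1 := h a (by simp)
    have h2 := ih (fun e he => h e (by simp [he]))
    calc |a.shift + (t.map Arc.shift).sum| ≤ |a.shift| + |(t.map Arc.shift).sum| := abs_add_le _ _
      _ ≤ 1 + t.length := by omega
      _ = ((t.length + 1 : ℕ) : ℤ) := by push_cast; ring

namespace SPath

theorem prefixShift_zero (p : SPath G) : p.prefixShift 0 = 0 := by simp [prefixShift]

theorem prefixShift_of_len_le (p : SPath G) {i : ℕ} (h : p.len ≤ i) :
    p.prefixShift i = p.shift := by
  simp [prefixShift, shift, List.take_of_length_le (le_trans (le_refl _) h)]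

theorem abs_prefixShift_le (p : SPath G) (i : ℕ) :
    |p.prefixShift i| ≤ (min i p.len : ℤ) := by
  have := abs_sum_shifts (p.arcs.take i)
    (fun e he => isArc_shift_abs (p.valid e (List.mem_of_mem_take he)))
  simpa [prefixShift, len, List.length_take] using this

theorem abs_shift_le (p : SPath G) : |p.shift| ≤ (p.len : ℤ) := by
  have := p.abs_prefixShift_le p.len
  rwa [prefixShift_of_len_le p (le_refl _), min_self] at this

/-- The node at position `t` along a path. -/
def nodeAt (p : SPath G) (t : ℕ) : Fin n := ((p.arcs.take t).getLast?).elim p.first Arc.tgt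

theorem nodeAt_zero (p : SPath G) : p.nodeAt 0 = p.first := rfl

theorem nodeAt_of_len_le (p : SPath G) {t : ℕ} (h : p.len ≤ t) : p.nodeAt t = p.last := by
  simp [nodeAt, last, List.take_of_length_le h]

theorem nodeAt_succ (p : SPath G) (t : ℕ) (h : t < p.len) :
    p.nodeAt (t + 1) = (p.arcs.get ⟨t, h⟩).tgt := by
  have h' : t < p.arcs.length := h
  have hne : p.arcs.take (t + 1) ≠ [] := by
    intro hc
    have h2 := congrArg List.length hc
    rw [List.length_take] at h2
    simp only [List.length_nil] at h2
    omega
  rw [nodeAt, List.getLast?_eq_getLast hne]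
  simp only [Option.elim_some]
  congr 1
  rw [List.getLast_eq_getElem]
  have hlen : (p.arcs.take (t + 1)).length = t + 1 := by
    simp [List.length_take]
    omega
  simp only [hlen]
  simp [List.getElem_take]

theorem src_get (p : SPath G) (t : ℕ) (h : t < p.len) :
    (p.arcs.get ⟨t, h⟩).src = p.nodeAt t := by
  cases t with
  | zero =>
    rw [nodeAt_zero]
    apply p.startOk
    rw [List.head?_eq_head (by intro hc; have h' : (0:ℕ) < p.arcs.length := h; rw [hc] at h'; simp at h')]
    simp only [Option.mem_def, Option.some.injEq]
    exact (List.get_mk_zero (l := p.arcs) h).symm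
  | succ k =>
    have hk : k < p.len := by omega
    rw [nodeAt_succ p k hk]
    have := List.isChain_iff_getElem.mp p.chainOk k (by have h' : k + 1 < p.arcs.length := h; omega)
    exact this.symm

end SPath

end Periodic
namespace Periodic

variable {n : ℕ} {G : StaticGraph n}

namespace SPath

theorem last_nil (i : Fin n) : (nil G i).last = i := rfl

theorem weight_nil (i : Fin n) : (nil G i).weight = 0 := rfl

theorem shift_nil (i : Fin n) : (nil G i).shift = 0 := rfl

/-- The single-arc path. -/
def one (e : Arc n) (h : G.IsArc e) : SPath G :=
  ⟨e.src, [e], by simpa using h, by simp, List.isChain_singleton e⟩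

theorem one_first (e : Arc n) (h : G.IsArc e) : (one e h).first = e.src := rfl
theorem one_last (e : Arc n) (h : G.IsArc e) : (one e h).last = e.tgt := rfl

theorem weight_append (p q : SPath G) (h : q.first = p.last) :
    (p.append q h).weight = p.weight + q.weight := by
  simp [weight, append]

theorem shift_append (p q : SPath G) (h : q.first = p.last) :
    (p.append q h).shift = p.shift + q.shift := by
  simp [shift, append]

theorem len_append (p q : SPath G) (h : q.first = p.last) :
    (p.append q h).len = p.len + q.len := by
  simp [len, append]

theorem first_append (p q : SPath G) (h : q.first = p.last) :
    (p.append q h).first = p.first := rfl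

theorem prefixShift_append (p q : SPath G) (h : q.first = p.last) (i : ℕ) :
    (p.append q h).prefixShift i = p.prefixShift i + q.prefixShift (i - p.len) := by
  simp only [prefixShift, append, List.take_append, List.map_append,
    List.sum_append, len]

theorem shiftsIn_append {p q : SPath G} (h : q.first = p.last) {k : ℤ} {S : Set ℤ}
    (hp : p.shiftsIn k S) (hq : q.shiftsIn (k + p.shift) S) :
    (p.append q h).shiftsIn k S := by
  intro i hi
  rw [prefixShift_append]
  rcases le_or_gt i p.len with hle | hlt
  · have : i - p.len = 0 := by omega
    rw [this, prefixShift_zero, add_zero]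
    exact hp i hle
  · rw [prefixShift_of_len_le p (le_of_lt hlt)]
    have hi' : i - p.len ≤ q.arcs.length := by
      have : i ≤ p.arcs.length + q.arcs.length := by
        simpa [append, len] using hi
      have hl : p.len = p.arcs.length := rfl
      omega
    have := hq (i - p.len) hi'
    rwa [add_assoc] at this

/-- The prefix path consisting of the first `t` arcs. -/
def takePath (p : SPath G) (t : ℕ) : SPath G where
  first := p.first
  arcs := p.arcs.take t
  valid := fun e he => p.valid e (List.mem_of_mem_take he)
  startOk := by
    intro e he
    apply p.startOk
    cases t with
    | zero => simp at he
    | succ m =>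
      cases harcs : p.arcs with
      | nil => rw [harcs] at he; simp at he
      | cons a l => rw [harcs] at he; simpa using he
  chainOk := p.chainOk.take t

theorem takePath_first (p : SPath G) (t : ℕ) : (p.takePath t).first = p.first := rfl
theorem takePath_last (p : SPath G) (t : ℕ) : (p.takePath t).last = p.nodeAt t := rfl
theorem takePath_len (p : SPath G) (t : ℕ) : (p.takePath t).len = min t p.len := by
  simp [takePath, len, List.length_take]

theorem takePath_shift (p : SPath G) (t : ℕ) : (p.takePath t).shift = p.prefixShift t := rfl

theorem takePath_prefixShift (p : SPath G) (t i : ℕ) :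
    (p.takePath t).prefixShift i = p.prefixShift (min i t) := by
  simp [takePath, prefixShift, List.take_take]

theorem takePath_shiftsIn (p : SPath G) (t : ℕ) {k : ℤ} {S : Set ℤ}
    (hp : p.shiftsIn k S) : (p.takePath t).shiftsIn k S := by
  intro i hi
  rw [takePath_prefixShift]
  exact hp (min i t) (by
    have : (p.takePath t).arcs.length = min t p.arcs.length := by
      simp [takePath, List.length_take]
    omega)

/-- The suffix path obtained by removing the first `t` arcs. -/
def dropPath (p : SPath G) (t : ℕ) : SPath G where
  first := p.nodeAt t
  arcs := p.arcs.drop t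
  valid := fun e he => p.valid e (List.mem_of_mem_drop he)
  startOk := by
    intro e he
    rw [List.head?_drop] at he
    have ht : t < p.arcs.length := by
      by_contra hc
      rw [List.getElem?_eq_none (by omega)] at he
      simp at he
    rw [List.getElem?_eq_getElem ht] at he
    simp only [Option.mem_def, Option.some.injEq] at he
    subst he
    exact p.src_get t ht
  chainOk := p.chainOk.drop t

theorem dropPath_first (p : SPath G) (t : ℕ) : (p.dropPath t).first = p.nodeAt t := rfl

theorem dropPath_last (p : SPath G) (t : ℕ) (h : t ≤ p.len) : (p.dropPath t).last = p.last := by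
  have hl : p.len = p.arcs.length := rfl
  rcases eq_or_lt_of_le h with heq | hlt
  · have hd : p.arcs.drop t = [] := List.drop_eq_nil_of_le (by omega)
    have : (p.dropPath t).last = p.nodeAt t := by
      simp [dropPath, last, hd]
    rw [this]
    exact p.nodeAt_of_len_le heq.ge
  · have ht : t < p.arcs.length := by omega
    have hne : p.arcs.drop t ≠ [] := by
      intro hc
      have := congrArg List.length hc
      simp only [List.length_drop, List.length_nil] at this
      omega
    have hne' : p.arcs ≠ [] := by
      intro hc
      rw [hc] at ht; simp at ht
    show (p.arcs.drop t).getLast?.elim (p.nodeAt t) Arc.tgt = p.arcs.getLast?.elim p.first Arc.tgt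
    rw [List.getLast?_eq_getLast hne, List.getLast?_eq_getLast hne']
    simp only [Option.elim_some]
    rw [List.getLast_drop]

theorem dropPath_len (p : SPath G) (t : ℕ) : (p.dropPath t).len = p.len - t := by
  simp [dropPath, len]

theorem dropPath_prefixShift (p : SPath G) (t i : ℕ) :
    (p.dropPath t).prefixShift i = p.prefixShift (t + i) - p.prefixShift t := by
  have h := congrArg (fun l : List (Arc n) => ((l.map Arc.shift).sum : ℤ)) (List.take_add (l := p.arcs) (i := t) (j := i))
  simp only [List.map_append, List.sum_append] at h
  show ((List.take i (p.arcs.drop t)).map Arc.shift).sum =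
    ((p.arcs.take (t+i)).map Arc.shift).sum - ((p.arcs.take t).map Arc.shift).sum
  omega

theorem dropPath_shift (p : SPath G) (t : ℕ) :
    (p.dropPath t).shift = p.shift - p.prefixShift t := by
  have h1 : (p.dropPath t).shift = (p.dropPath t).prefixShift ((p.dropPath t).len) :=
    (prefixShift_of_len_le _ (le_refl _)).symm
  rw [h1, dropPath_prefixShift, dropPath_len]
  rcases le_or_gt t p.len with hle | hlt
  · rw [show t + (p.len - t) = p.len by omega, prefixShift_of_len_le p (le_refl _)]
  · rw [show p.len - t = 0 by omega, add_zero, prefixShift_of_len_le p (le_of_lt hlt)]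

theorem dropPath_shiftsIn (p : SPath G) (t : ℕ) {k : ℤ} {S : Set ℤ}
    (hp : p.shiftsIn k S) : (p.dropPath t).shiftsIn (k + p.prefixShift t) S := by
  intro i hi
  rw [dropPath_prefixShift]
  rcases le_or_gt (t + i) p.arcs.length with hle | hgt
  · have h1 := hp (t + i) hle
    have heq : k + p.prefixShift t + (p.prefixShift (t+i) - p.prefixShift t)
        = k + p.prefixShift (t+i) := by ring
    rw [heq]
    exact h1
  · have ht : p.arcs.length ≤ t := by
      have hlen : i ≤ p.arcs.length - t := by
        have : (p.dropPath t).arcs.length = p.arcs.length - t := by simp [dropPath]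
        omega
      omega
    have h1 : p.prefixShift (t+i) = p.shift :=
      prefixShift_of_len_le p (by show p.arcs.length ≤ t + i; omega)
    have h2 : p.prefixShift t = p.shift := prefixShift_of_len_le p ht
    rw [h1, h2]
    have h3 := hp p.len (le_refl _)
    rw [prefixShift_of_len_le p (le_refl _)] at h3
    have heq : k + p.shift + (p.shift - p.shift) = k + p.shift := by ring
    rw [heq]
    exact h3

theorem weight_eq_prefix_add_drop (p : SPath G) (t : ℕ) :
    p.weight = (p.takePath t).weight + (p.dropPath t).weight := by
  simp only [weight, takePath, dropPath]
  rw [← List.sum_append, ← List.map_append, List.take_append_drop]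

end SPath

end Periodic
namespace Periodic

variable {n : ℕ} {G : StaticGraph n}

namespace SPath

theorem dropPath_nodeAt (p : SPath G) (t j : ℕ) (h : t + j ≤ p.len) :
    (p.dropPath t).nodeAt j = p.nodeAt (t + j) := by
  cases j with
  | zero => rw [nodeAt_zero]; rfl
  | succ m =>
    have hm : m < (p.dropPath t).len := by
      rw [dropPath_len]; omega
    have hm' : t + m < p.len := by omega
    rw [show t + (m + 1) = (t + m) + 1 by omega, nodeAt_succ _ m hm, nodeAt_succ p (t + m) hm']
    have : ((p.dropPath t).arcs.get ⟨m, hm⟩) = p.arcs.get ⟨t + m, hm'⟩ := by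
      show (p.arcs.drop t).get ⟨m, _⟩ = _
      simp
    rw [this]

theorem npow_zero (q : SPath G) (hc : q.IsCircuit) : npow q hc 0 = nil G q.first := rfl

theorem npow_succ (q : SPath G) (hc : q.IsCircuit) (x : ℕ) :
    npow q hc (x + 1) = q.append (npow q hc x) ((npow_first q hc x).trans hc) := rfl

theorem weight_npow (q : SPath G) (hc : q.IsCircuit) (x : ℕ) :
    (npow q hc x).weight = (x : ℚ) * q.weight := by
  induction x with
  | zero => simp [npow_zero, weight_nil]
  | succ m ih =>
    rw [npow_succ, weight_append, ih]
    push_cast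
    ring

theorem shift_npow (q : SPath G) (hc : q.IsCircuit) (x : ℕ) :
    (npow q hc x).shift = (x : ℤ) * q.shift := by
  induction x with
  | zero => simp [npow_zero, shift_nil]
  | succ m ih =>
    rw [npow_succ, shift_append, ih]
    push_cast
    ring

theorem shiftsIn_npow (q : SPath G) (hc : q.IsCircuit) (x : ℕ) {k : ℤ} {S : Set ℤ}
    (h : ∀ t : ℕ, t < x → q.shiftsIn (k + t * q.shift) S)
    (hend : k + x * q.shift ∈ S) :
    (npow q hc x).shiftsIn k S := by
  induction x generalizing k with
  | zero =>
    intro i hi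
    rw [npow_zero] at hi ⊢
    simp only [nil] at hi
    simp only [List.length_nil, Nat.le_zero] at hi
    subst hi
    rw [prefixShift_zero, add_zero]
    simpa using hend
  | succ m ih =>
    rw [npow_succ]
    apply shiftsIn_append
    · have := h 0 (by omega)
      simpa using this
    · apply ih
      · intro t ht
        have := h (t + 1) (by omega)
        have heq : k + (t + 1 : ℕ) * q.shift = k + q.shift + (t : ℕ) * q.shift := by
          push_cast; ring
        rwa [heq] at this
      · have heq : k + q.shift + (m : ℕ) * q.shift = k + (m + 1 : ℕ) * q.shift := by
          push_cast; ring
        rw [heq]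
        exact hend

end SPath

/-- Reachability in the static graph. -/
def Reaches (G : StaticGraph n) (i j : Fin n) : Prop :=
  ∃ p : SPath G, p.first = i ∧ p.last = j

theorem Reaches.refl (G : StaticGraph n) (i : Fin n) : Reaches G i i :=
  ⟨SPath.nil G i, rfl, rfl⟩

theorem Reaches.trans {i j l : Fin n} (h1 : Reaches G i j) (h2 : Reaches G j l) :
    Reaches G i l := by
  obtain ⟨p, hp1, hp2⟩ := h1
  obtain ⟨q, hq1, hq2⟩ := h2
  exact ⟨p.append q (by rw [hq1, hp2]), hp1, by rw [SPath.last_append]; exact hq2⟩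

theorem reaches_of_arc {e : Arc n} (h : G.IsArc e) : Reaches G e.src e.tgt :=
  ⟨SPath.one e h, rfl, rfl⟩

end Periodic
namespace Periodic

variable {n : ℕ} {G : StaticGraph n}

theorem sum_take_drop (f : Arc n → ℚ) (l : List (Arc n)) (t j : ℕ) :
    (((l.drop t).take j).map f).sum = ((l.take (t + j)).map f).sum - ((l.take t).map f).sum := by
  have h := congrArg (fun l : List (Arc n) => ((l.map f).sum : ℚ)) (List.take_add (l := l) (i := t) (j := j))
  simp only [List.map_append, List.sum_append] at h
  rw [h]
  ring

namespace SPath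

/-- The circuit cut between positions `t₁` and `t₂`. -/
def midPath (p : SPath G) (t₁ t₂ : ℕ) : SPath G := (p.dropPath t₁).takePath (t₂ - t₁)

/-- The path obtained by removing the part between positions `t₁` and `t₂`. -/
def cutPath (p : SPath G) (t₁ t₂ : ℕ) (heq : p.nodeAt t₁ = p.nodeAt t₂) : SPath G :=
  (p.takePath t₁).append (p.dropPath t₂) (by rw [dropPath_first, takePath_last, heq])

section Surgery

variable (p : SPath G) (t₁ t₂ : ℕ)

theorem midPath_first : (p.midPath t₁ t₂).first = p.nodeAt t₁ := rfl

theorem midPath_last (h1 : t₁ ≤ t₂) (h2 : t₂ ≤ p.len) :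
    (p.midPath t₁ t₂).last = p.nodeAt t₂ := by
  rw [midPath, takePath_last, dropPath_nodeAt p t₁ (t₂ - t₁) (by omega),
    show t₁ + (t₂ - t₁) = t₂ by omega]

theorem midPath_len (h1 : t₁ ≤ t₂) (h2 : t₂ ≤ p.len) :
    (p.midPath t₁ t₂).len = t₂ - t₁ := by
  rw [midPath, takePath_len, dropPath_len]
  omega

theorem midPath_shift (h1 : t₁ ≤ t₂) (h2 : t₂ ≤ p.len) :
    (p.midPath t₁ t₂).shift = p.prefixShift t₂ - p.prefixShift t₁ := by
  rw [midPath, takePath_shift, dropPath_prefixShift, show t₁ + (t₂ - t₁) = t₂ by omega]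

theorem midPath_weight : (p.midPath t₁ t₂).weight = ((p.arcs.take (t₁ + (t₂ - t₁))).map G.w).sum
    - ((p.arcs.take t₁).map G.w).sum := by
  rw [midPath]
  show (((p.arcs.drop t₁).take (t₂ - t₁)).map G.w).sum = _
  rw [sum_take_drop]

theorem midPath_prefixShift (j : ℕ) (hj : j ≤ t₂ - t₁) :
    (p.midPath t₁ t₂).prefixShift j = p.prefixShift (t₁ + j) - p.prefixShift t₁ := by
  rw [midPath, takePath_prefixShift, min_eq_left hj, dropPath_prefixShift]

theorem midPath_shiftsIn {k : ℤ} {S : Set ℤ} (hp : p.shiftsIn k S) :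
    (p.midPath t₁ t₂).shiftsIn (k + p.prefixShift t₁) S :=
  takePath_shiftsIn _ _ (dropPath_shiftsIn p t₁ hp)

variable (heq : p.nodeAt t₁ = p.nodeAt t₂)

theorem cutPath_first : (p.cutPath t₁ t₂ heq).first = p.first := rfl

theorem cutPath_last (h2 : t₂ ≤ p.len) : (p.cutPath t₁ t₂ heq).last = p.last := by
  rw [cutPath, last_append, dropPath_last _ _ h2]

theorem cutPath_len (h1 : t₁ ≤ t₂) (h2 : t₂ ≤ p.len) :
    (p.cutPath t₁ t₂ heq).len = p.len - (t₂ - t₁) := by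
  rw [cutPath, len_append, takePath_len, dropPath_len]
  omega

theorem cutPath_shift (h1 : t₁ ≤ t₂) (h2 : t₂ ≤ p.len) :
    (p.cutPath t₁ t₂ heq).shift = p.shift - (p.midPath t₁ t₂).shift := by
  rw [cutPath, shift_append, takePath_shift, dropPath_shift, midPath_shift p t₁ t₂ h1 h2]
  ring

theorem cutPath_weight (h1 : t₁ ≤ t₂) (h2 : t₂ ≤ p.len) :
    (p.cutPath t₁ t₂ heq).weight = p.weight - (p.midPath t₁ t₂).weight := by
  rw [cutPath, weight_append, midPath_weight,
    show t₁ + (t₂ - t₁) = t₂ by omega]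
  have h3 : p.weight = (p.takePath t₂).weight + (p.dropPath t₂).weight :=
    weight_eq_prefix_add_drop p t₂
  have h4 : (p.takePath t₁).weight = ((p.arcs.take t₁).map G.w).sum := rfl
  have h5 : (p.takePath t₂).weight = ((p.arcs.take t₂).map G.w).sum := rfl
  rw [h4]
  rw [h3, h5]
  ring

theorem cutPath_shiftsIn {k : ℤ} {S : Set ℤ} (hp : p.shiftsIn k S) (h1 : t₁ ≤ t₂)
    (h2 : t₂ ≤ p.len) (hz : p.prefixShift t₁ = p.prefixShift t₂) :
    (p.cutPath t₁ t₂ heq).shiftsIn k S := by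
  apply shiftsIn_append
  · exact takePath_shiftsIn p t₁ hp
  · rw [takePath_shift, hz]
    exact dropPath_shiftsIn p t₂ hp

end Surgery

end SPath

end Periodic
namespace Periodic

variable {n : ℕ} {G : StaticGraph n}

/-- The finset of potential arcs of `G`. -/
def validArcs (n : ℕ) : Finset (Arc n) :=
  Finset.image (fun q : (Fin n × Fin n) × ℤ => ⟨q.1.1, q.1.2, q.2⟩)
    (Finset.univ ×ˢ ({-1, 0, 1} : Finset ℤ))

theorem mem_validArcs {e : Arc n} (h : G.IsArc e) : e ∈ validArcs n := by
  rcases isArc_shift h with h' | h' | h' <;>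
  · refine Finset.mem_image.mpr ⟨((e.src, e.tgt), e.shift), ?_, ?_⟩
    · simp [h']
    · rfl

theorem weights_finite (G : StaticGraph n) (f : Arc n → ℚ) (L : ℕ) :
    {x : ℚ | ∃ p : SPath G, p.len ≤ L ∧ x = (p.arcs.map f).sum}.Finite := by
  have hfin : {l : List {e : Arc n // e ∈ validArcs n} | l.length ≤ L}.Finite :=
    List.finite_length_le _ L
  apply Set.Finite.subset (hfin.image
    (fun l : List {e : Arc n // e ∈ validArcs n} => ((l.map Subtype.val).map f).sum))
  rintro x ⟨p, hlen, rfl⟩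
  refine ⟨p.arcs.attach.map (fun e => ⟨e.1, mem_validArcs (p.valid e.1 e.2)⟩), ?_, ?_⟩
  · simp only [Set.mem_setOf_eq, List.length_map, List.length_attach]
    exact hlen
  · show (List.map f (List.map Subtype.val (List.map (fun e => (⟨e.val, mem_validArcs (p.valid e.val e.property)⟩ : {e : Arc n // e ∈ validArcs n})) p.arcs.attach))).sum = (List.map f p.arcs).sum
    congr 2
    rw [List.map_map]
    exact List.attach_map_subtype_val p.arcs

end Periodic
namespace Periodic

variable {n : ℕ} {G : StaticGraph n}

theorem mem_Sint {k : ℤ} : k ∈ Sint n ↔ -(n : ℤ) ≤ k ∧ k ≤ (n : ℤ) := Iff.rfl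

/-- Remove a level-repeating circuit from a pseudo-circuit: weight does not decrease. -/
theorem pcw_reduce (hna : ¬ HasPosWeightCircuit G (Sint n)) (i : Fin n) (s : ℤ) :
    ∀ L : ℕ, ∀ p : SPath G, p.len ≤ L → p.shiftsIn 0 (Sint n) → p.first = i → p.last = i →
      p.shift = s →
      ∃ q : SPath G, q.shiftsIn 0 (Sint n) ∧ q.first = i ∧ q.last = i ∧ q.shift = s ∧
        q.len ≤ n * (2 * n + 1) ∧ p.weight ≤ q.weight := by
  intro L
  induction L with
  | zero =>
    intro p hlen h1 h2 h3 h4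
    exact ⟨p, h1, h2, h3, h4, by omega, le_refl _⟩
  | succ L ih =>
    intro p hlen h1 h2 h3 h4
    rcases le_or_gt p.len (n * (2 * n + 1)) with hle | hgt
    · exact ⟨p, h1, h2, h3, h4, hle, le_refl _⟩
    · -- pigeonhole
      have hcard : Fintype.card (Fin n × ↥(Finset.Icc (-(n:ℤ)) (n:ℤ))) < Fintype.card (Fin (p.len + 1)) := by
        rw [Fintype.card_prod, Fintype.card_fin, Fintype.card_coe, Int.card_Icc, Fintype.card_fin]
        have : ((n : ℤ) + 1 - -(n : ℤ)).toNat = 2 * n + 1 := by omega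
        rw [this]
        omega
      have hmem : ∀ t : Fin (p.len + 1), p.prefixShift t.1 ∈ Finset.Icc (-(n:ℤ)) (n:ℤ) := by
        intro t
        have := h1 t.1 (by have := t.2; have hl : p.len = p.arcs.length := rfl; omega)
        rw [zero_add] at this
        rw [Finset.mem_Icc]
        exact this
      obtain ⟨x, y, hxy, hfeq⟩ := Fintype.exists_ne_map_eq_of_card_lt
        (fun t : Fin (p.len + 1) => ((p.nodeAt t.1, ⟨p.prefixShift t.1, hmem t⟩) :
          Fin n × ↥(Finset.Icc (-(n:ℤ)) (n:ℤ)))) hcard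
      have key : ∀ t₁ t₂ : ℕ, t₁ < t₂ → t₂ ≤ p.len → p.nodeAt t₁ = p.nodeAt t₂ →
          p.prefixShift t₁ = p.prefixShift t₂ →
          ∃ q : SPath G, q.shiftsIn 0 (Sint n) ∧ q.first = i ∧ q.last = i ∧ q.shift = s ∧
            q.len ≤ n * (2 * n + 1) ∧ p.weight ≤ q.weight := by
        intro t₁ t₂ hlt hle2 heqn heqs
        -- the removed circuit has nonpositive weight
        have hmidw : (p.midPath t₁ t₂).weight ≤ 0 := by
          by_contra hc
          push_neg at hc
          apply hna
          refine ⟨p.midPath t₁ t₂, 0 + p.prefixShift t₁, SPath.midPath_shiftsIn p t₁ t₂ h1, ?_, ?_, hc⟩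
          · show (p.midPath t₁ t₂).first = (p.midPath t₁ t₂).last
            rw [SPath.midPath_first, SPath.midPath_last p t₁ t₂ (le_of_lt hlt) hle2, heqn]
          · rw [SPath.midPath_shift p t₁ t₂ (le_of_lt hlt) hle2, heqs]
            ring
        set q := p.cutPath t₁ t₂ heqn with hq
        have hql : q.len ≤ L := by
          rw [hq, SPath.cutPath_len p t₁ t₂ heqn (le_of_lt hlt) hle2]
          omega
        obtain ⟨r, hr1, hr2, hr3, hr4, hr5, hr6⟩ := ih q hql
          (SPath.cutPath_shiftsIn p t₁ t₂ heqn h1 (le_of_lt hlt) hle2 heqs)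
          (by rw [hq, SPath.cutPath_first]; exact h2)
          (by rw [hq, SPath.cutPath_last p t₁ t₂ heqn hle2]; exact h3)
          (by rw [hq, SPath.cutPath_shift p t₁ t₂ heqn (le_of_lt hlt) hle2,
                SPath.midPath_shift p t₁ t₂ (le_of_lt hlt) hle2, heqs, h4]; ring)
        refine ⟨r, hr1, hr2, hr3, hr4, hr5, le_trans ?_ hr6⟩
        rw [hq, SPath.cutPath_weight p t₁ t₂ heqn (le_of_lt hlt) hle2]
        linarith
      have h2nd : p.prefixShift x.1 = p.prefixShift y.1 := by
        have := congrArg (fun z => (z.2 : ℤ)) hfeq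
        simpa using this
      have h1st : p.nodeAt x.1 = p.nodeAt y.1 := congrArg Prod.fst hfeq
      rcases lt_trichotomy x.1 y.1 with hlt | heq' | hgt'
      · exact key x.1 y.1 hlt (by have := y.2; omega) h1st h2nd
      · exact absurd (Fin.ext heq') hxy
      · exact key y.1 x.1 hgt' (by have := x.2; omega) h1st.symm h2nd.symm

theorem pcw_isGreatest (hna : ¬ HasPosWeightCircuit G (Sint n)) (i : Fin n) (s : ℤ)
    (hne : (PCWeights G (Sint n) i s).Nonempty) :
    ∃ w, IsGreatest (PCWeights G (Sint n) i s) w := by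
  set T : Set ℚ := {w | ∃ p : SPath G, p.shiftsIn 0 (Sint n) ∧ p.first = i ∧ p.last = i ∧
    p.shift = s ∧ p.len ≤ n * (2 * n + 1) ∧ p.weight = w} with hT
  have hTfin : T.Finite := by
    apply Set.Finite.subset (weights_finite G G.w (n * (2 * n + 1)))
    rintro w ⟨p, _, _, _, _, hlen, rfl⟩
    exact ⟨p, hlen, rfl⟩
  have hTne : T.Nonempty := by
    obtain ⟨w, p, hp1, hp2, hp3, hp4, hp5⟩ := hne
    obtain ⟨q, hq1, hq2, hq3, hq4, hq5, hq6⟩ := pcw_reduce hna i s p.len p (le_refl _) hp1 hp2 hp3 hp4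
    exact ⟨q.weight, q, hq1, hq2, hq3, hq4, hq5, rfl⟩
  have hFne : hTfin.toFinset.Nonempty := by
    rwa [Set.Finite.toFinset_nonempty]
  refine ⟨hTfin.toFinset.max' hFne, ?_, ?_⟩
  · have : hTfin.toFinset.max' hFne ∈ T := by
      rw [← Set.Finite.mem_toFinset hTfin]
      exact hTfin.toFinset.max'_mem hFne
    obtain ⟨p, hp1, hp2, hp3, hp4, _, hp6⟩ := this
    exact ⟨p, hp1, hp2, hp3, hp4, hp6⟩
  · rintro w ⟨p, hp1, hp2, hp3, hp4, hp5⟩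
    obtain ⟨q, hq1, hq2, hq3, hq4, hq5, hq6⟩ := pcw_reduce hna i s p.len p (le_refl _) hp1 hp2 hp3 hp4
    have hqT : q.weight ∈ T := ⟨q, hq1, hq2, hq3, hq4, hq5, rfl⟩
    have := Finset.le_max' hTfin.toFinset q.weight (by rwa [Set.Finite.mem_toFinset])
    rw [← hp5]
    exact le_trans hq6 this

end Periodic
namespace Periodic

variable {n : ℕ} {G : StaticGraph n}

noncomputable section AlphaBeta

open Classical in
/-- The rate `w(i,s)/s` of the best pseudo-circuit at `(i,s)`, or `0` if undefined. -/
def rate (G : StaticGraph n) (q : Fin n × ℤ) : ℚ :=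
  if h : ∃ w, IsGreatest (PCWeights G (Sint n) q.1 q.2) w then h.choose / (q.2 : ℚ) else 0

open Classical in
/-- Pairs `(i,s)`, `s ∈ [-n,-1]`, having a best pseudo-circuit. -/
def DPairs (G : StaticGraph n) : Finset (Fin n × ℤ) :=
  (Finset.univ ×ˢ Finset.Icc (-(n:ℤ)) (-1)).filter
    (fun q => ∃ w, IsGreatest (PCWeights G (Sint n) q.1 q.2) w)

/-- A lower bound for all the down-rates. -/
def c0 (G : StaticGraph n) : ℚ :=
  (insert 0 ((DPairs G).image (rate G))).min' (Finset.insert_nonempty _ _)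

open Classical in
/-- Pairs `(i₁,s₁)`, `s₁ ∈ [1,n]`, having a best pseudo-circuit, with `i₁` reaching `i`. -/
def UPairs (G : StaticGraph n) (i : Fin n) : Finset (Fin n × ℤ) :=
  (Finset.univ ×ˢ Finset.Icc (1:ℤ) (n:ℤ)).filter
    (fun q => (∃ w, IsGreatest (PCWeights G (Sint n) q.1 q.2) w) ∧ Reaches G q.1 i)

/-- The linear-growth potential at node `i`. -/
def alpha (G : StaticGraph n) (i : Fin n) : ℚ :=
  (insert (c0 G) ((UPairs G i).image (rate G))).max' (Finset.insert_nonempty _ _)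

theorem rate_spec {q : Fin n × ℤ} {w : ℚ} (h : IsGreatest (PCWeights G (Sint n) q.1 q.2) w)
    (hs : q.2 ≠ 0) : w = rate G q * (q.2 : ℚ) := by
  have hex : ∃ w, IsGreatest (PCWeights G (Sint n) q.1 q.2) w := ⟨w, h⟩
  have hchoose : hex.choose = w := hex.choose_spec.unique h
  rw [rate, dif_pos hex, hchoose]
  have hq : (q.2:ℚ) ≠ 0 := by exact_mod_cast hs
  field_simp

theorem alpha_mono {i j : Fin n} (h : Reaches G i j) : alpha G i ≤ alpha G j := by
  apply Finset.max'_subset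
  apply Finset.insert_subset_insert
  apply Finset.image_subset_image
  intro q hq
  simp only [UPairs, Finset.mem_filter] at hq ⊢
  exact ⟨hq.1, hq.2.1, hq.2.2.trans h⟩

theorem rate_le_alpha {i : Fin n} {q : Fin n × ℤ} (hq : q ∈ UPairs G i) :
    rate G q ≤ alpha G i :=
  Finset.le_max' _ _ (Finset.mem_insert_of_mem (Finset.mem_image_of_mem _ hq))

theorem c0_le_rate {q : Fin n × ℤ} (hq : q ∈ DPairs G) : c0 G ≤ rate G q :=
  Finset.min'_le _ _ (Finset.mem_insert_of_mem (Finset.mem_image_of_mem _ hq))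

/-- Hypothesis: no "good pair" exists (negation of condition (b)). -/
def NoGoodPair (G : StaticGraph n) : Prop :=
  ∀ i₁ i₂ : Fin n, ∀ s₁ s₂ : ℤ, 1 ≤ s₁ → s₁ ≤ (n:ℤ) → -(n:ℤ) ≤ s₂ → s₂ ≤ -1 →
    Reaches G i₁ i₂ → ∀ w₁ w₂ : ℚ, IsGreatest (PCWeights G (Sint n) i₁ s₁) w₁ →
    IsGreatest (PCWeights G (Sint n) i₂ s₂) w₂ →
    -(s₂:ℚ) * w₁ + (s₁:ℚ) * w₂ ≤ 0

theorem alpha_le_down (hnb : NoGoodPair G) {i₂ : Fin n} {s₂ : ℤ} {w₂ : ℚ}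
    (hs1 : -(n:ℤ) ≤ s₂) (hs2 : s₂ ≤ -1)
    (hg : IsGreatest (PCWeights G (Sint n) i₂ s₂) w₂) :
    alpha G i₂ ≤ rate G (i₂, s₂) := by
  have hd : (i₂, s₂) ∈ DPairs G := by
    simp only [DPairs, Finset.mem_filter, Finset.mem_product, Finset.mem_univ, true_and,
      Finset.mem_Icc]
    exact ⟨⟨hs1, hs2⟩, w₂, hg⟩
  apply Finset.max'_le
  intro y hy
  rcases Finset.mem_insert.mp hy with hy | hy
  · rw [hy]; exact c0_le_rate hd
  · obtain ⟨q, hq, rfl⟩ := Finset.mem_image.mp hy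
    simp only [UPairs, Finset.mem_filter, Finset.mem_product, Finset.mem_univ, true_and,
      Finset.mem_Icc] at hq
    obtain ⟨⟨hq1, hq2⟩, ⟨w₁, hw₁⟩, hreach⟩ := hq
    have hle := hnb q.1 i₂ q.2 s₂ hq1 hq2 hs1 hs2 hreach w₁ w₂ hw₁ hg
    -- rate q = w₁ / q.2, rate (i₂,s₂) = w₂ / s₂
    have hr1 : w₁ = rate G q * (q.2 : ℚ) := rate_spec hw₁ (by omega)
    have hr2 : w₂ = rate G (i₂, s₂) * (s₂ : ℚ) := rate_spec hg (by omega)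
    have hq2' : (1:ℚ) ≤ (q.2:ℚ) := by exact_mod_cast hq1
    have hs2' : (s₂:ℚ) ≤ -1 := by exact_mod_cast hs2
    rw [hr1, hr2] at hle
    by_contra hcon
    push_neg at hcon
    have h0 : (0:ℚ) < (q.2:ℚ) * (-(s₂:ℚ)) := by nlinarith
    nlinarith [hle, mul_pos h0 (sub_pos.mpr hcon)]

/-- Any short circuit has weight at most `alpha * shift`. -/
theorem circuit_weight_le (hna : ¬ HasPosWeightCircuit G (Sint n)) (hnb : NoGoodPair G)
    (C : SPath G) (hc : C.IsCircuit) (h1 : 1 ≤ C.len) (h2 : C.len ≤ n) :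
    C.weight ≤ alpha G C.first * (C.shift : ℚ) := by
  have hshiftsIn : C.shiftsIn 0 (Sint n) := by
    intro i hi
    rw [zero_add, mem_Sint]
    have h3 : (min i C.len : ℤ) ≤ (n : ℤ) := by
      have hmin : min i C.len ≤ n := le_trans (min_le_right i C.len) h2
      exact_mod_cast hmin
    exact abs_le.mp (le_trans (C.abs_prefixShift_le i) h3)
  have hmem : C.weight ∈ PCWeights G (Sint n) C.first C.shift :=
    ⟨C, hshiftsIn, rfl, hc.symm, rfl, rfl⟩
  obtain ⟨habs1, habs2⟩ := abs_le.mp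
    (le_trans C.abs_shift_le (show (C.len:ℤ) ≤ (n:ℤ) by exact_mod_cast h2))
  rcases lt_trichotomy C.shift 0 with hs | hs | hs
  · obtain ⟨w, hg⟩ := pcw_isGreatest hna C.first C.shift ⟨C.weight, hmem⟩
    have hle : C.weight ≤ w := hg.2 hmem
    have hw : w = rate G (C.first, C.shift) * (C.shift : ℚ) := rate_spec hg (by omega)
    have hda : alpha G C.first ≤ rate G (C.first, C.shift) :=
      alpha_le_down hnb (by omega) (by omega) hg
    have hsq : (C.shift : ℚ) < 0 := by exact_mod_cast hs
    nlinarith [hle, hda, hsq]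
  · rw [hs]
    simp only [Int.cast_zero, mul_zero]
    by_contra hcon
    push_neg at hcon
    exact hna ⟨C, 0, hshiftsIn, hc, hs, hcon⟩
  · obtain ⟨w, hg⟩ := pcw_isGreatest hna C.first C.shift ⟨C.weight, hmem⟩
    have hle : C.weight ≤ w := hg.2 hmem
    have hw : w = rate G (C.first, C.shift) * (C.shift : ℚ) := rate_spec hg (by omega)
    have hup : rate G (C.first, C.shift) ≤ alpha G C.first := by
      apply rate_le_alpha
      simp only [UPairs, Finset.mem_filter, Finset.mem_product, Finset.mem_univ, true_and,
        Finset.mem_Icc]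
      exact ⟨⟨by omega, by omega⟩, ⟨w, hg⟩, Reaches.refl G C.first⟩
    have hsq : (0:ℚ) < (C.shift : ℚ) := by exact_mod_cast hs
    nlinarith [hle, hup, hsq]

end AlphaBeta

end Periodic
namespace Periodic

variable {n : ℕ} {G : StaticGraph n}

namespace SPath

/-- Generic arc-sum along a path. -/
def fsum (f : Arc n → ℚ) (p : SPath G) : ℚ := (p.arcs.map f).sum

theorem fsum_midPath (f : Arc n → ℚ) (p : SPath G) (t₁ t₂ : ℕ) :
    fsum f (p.midPath t₁ t₂) = ((p.arcs.take (t₁ + (t₂ - t₁))).map f).sum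
      - ((p.arcs.take t₁).map f).sum := by
  show (((p.arcs.drop t₁).take (t₂ - t₁)).map f).sum = _
  rw [sum_take_drop]

theorem fsum_cutPath (f : Arc n → ℚ) (p : SPath G) (t₁ t₂ : ℕ)
    (heq : p.nodeAt t₁ = p.nodeAt t₂) (h1 : t₁ ≤ t₂) (h2 : t₂ ≤ p.len) :
    fsum f (p.cutPath t₁ t₂ heq) = fsum f p - fsum f (p.midPath t₁ t₂) := by
  rw [fsum_midPath, show t₁ + (t₂ - t₁) = t₂ by omega]
  show ((((p.takePath t₁).arcs ++ (p.dropPath t₂).arcs)).map f).sum = _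
  rw [List.map_append, List.sum_append]
  have h3 : ((p.dropPath t₂).arcs.map f).sum = (p.arcs.map f).sum - ((p.arcs.take t₂).map f).sum := by
    have := congrArg (fun l : List (Arc n) => ((l.map f).sum : ℚ)) (List.take_append_drop t₂ p.arcs)
    simp only [List.map_append, List.sum_append] at this
    show ((p.arcs.drop t₂).map f).sum = _
    linarith
  show ((p.arcs.take t₁).map f).sum + ((p.dropPath t₂).arcs.map f).sum = _
  rw [h3]
  show _ = (p.arcs.map f).sum - (((p.arcs.take t₂).map f).sum - ((p.arcs.take t₁).map f).sum)
  ring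

theorem fsum_dropPath_one (f : Arc n → ℚ) (p : SPath G) {e : Arc n} {l : List (Arc n)}
    (h : p.arcs = e :: l) : fsum f p = f e + fsum f (p.dropPath 1) := by
  show (p.arcs.map f).sum = f e + ((p.arcs.drop 1).map f).sum
  rw [h]
  simp

end SPath

noncomputable section Beta

/-- Reweighted arc weight. -/
def hatw (G : StaticGraph n) (e : Arc n) : ℚ := G.w e - alpha G e.tgt * (e.shift : ℚ)

theorem reaches_first_tgt (p : SPath G) {e : Arc n} (he : e ∈ p.arcs) :
    Reaches G p.first e.tgt ∧ Reaches G e.tgt p.last := by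
  obtain ⟨t, he'⟩ := List.mem_iff_get.mp he
  have ht : t.1 < p.len := t.2
  constructor
  · refine ⟨p.takePath (t.1 + 1), rfl, ?_⟩
    rw [takePath_last, nodeAt_succ p t.1 ht, ← he']
  · refine ⟨p.dropPath (t.1 + 1), ?_, dropPath_last p _ (by omega)⟩
    rw [dropPath_first, nodeAt_succ p t.1 ht, ← he']

theorem sum_alpha_shift_circuit (C : SPath G) (hc : C.IsCircuit) :
    (C.arcs.map (fun e => alpha G e.tgt * (e.shift : ℚ))).sum
      = alpha G C.first * (C.shift : ℚ) := by
  have hconst : ∀ e ∈ C.arcs, alpha G e.tgt = alpha G C.first := by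
    intro e he
    obtain ⟨h1, h2⟩ := reaches_first_tgt C he
    rw [← hc] at h2
    exact le_antisymm (alpha_mono h2) (alpha_mono h1)
  have : C.arcs.map (fun e => alpha G e.tgt * (e.shift : ℚ))
      = C.arcs.map (fun e => alpha G C.first * (e.shift : ℚ)) := by
    apply List.map_congr_left
    intro e he
    rw [hconst e he]
  rw [this]
  show _ = alpha G C.first * ((C.arcs.map Arc.shift).sum : ℚ)
  induction C.arcs with
  | nil => simp
  | cons a l ih =>
    simp only [List.map_cons, List.sum_cons, ih]
    push_cast
    ring

theorem hatweight_eq (p : SPath G) :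
    SPath.fsum (hatw G) p = p.weight - (p.arcs.map (fun e => alpha G e.tgt * (e.shift : ℚ))).sum := by
  show (p.arcs.map (hatw G)).sum = (p.arcs.map G.w).sum - _
  induction p.arcs with
  | nil => simp
  | cons a l ih =>
    simp only [List.map_cons, List.sum_cons, ih, hatw]
    ring

theorem hatweight_circuit_le (hna : ¬ HasPosWeightCircuit G (Sint n)) (hnb : NoGoodPair G)
    (C : SPath G) (hc : C.IsCircuit) (h1 : 1 ≤ C.len) (h2 : C.len ≤ n) :
    SPath.fsum (hatw G) C ≤ 0 := by
  rw [hatweight_eq, sum_alpha_shift_circuit C hc]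
  have := circuit_weight_le hna hnb C hc h1 h2
  linarith

theorem bset_finite (G : StaticGraph n) (i : Fin n) :
    {x : ℚ | ∃ p : SPath G, p.last = i ∧ p.len < n ∧ x = SPath.fsum (hatw G) p}.Finite := by
  apply Set.Finite.subset (weights_finite G (hatw G) n)
  rintro x ⟨p, _, hlen, rfl⟩
  exact ⟨p, by omega, rfl⟩

theorem bset_nonempty (G : StaticGraph n) (hn : 0 < n) (i : Fin n) :
    (bset_finite G i).toFinset.Nonempty := by
  rw [Set.Finite.toFinset_nonempty]
  refine ⟨0, SPath.nil G i, rfl, ?_, ?_⟩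
  · show (0:ℕ) < n; exact hn
  · simp [SPath.fsum, SPath.nil]

/-- The additive potential at node `i`. -/
def beta (G : StaticGraph n) (hn : 0 < n) (i : Fin n) : ℚ :=
  (bset_finite G i).toFinset.max' (bset_nonempty G hn i)

/-- Every path ending at `i` has reweighted weight at most `beta i`. -/
theorem claimQ (hna : ¬ HasPosWeightCircuit G (Sint n)) (hnb : NoGoodPair G) (hn : 0 < n) :
    ∀ L : ℕ, ∀ p : SPath G, p.len ≤ L → SPath.fsum (hatw G) p ≤ beta G hn p.last := by
  intro L
  induction L with
  | zero =>
    intro p hlen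
    apply Finset.le_max'
    rw [Set.Finite.mem_toFinset]
    exact ⟨p, rfl, by omega, rfl⟩
  | succ L ih =>
    intro p hlen
    rcases lt_or_ge p.len n with hlt | hge
    · apply Finset.le_max'
      rw [Set.Finite.mem_toFinset]
      exact ⟨p, rfl, hlt, rfl⟩
    · -- pigeonhole on the first n+1 nodes
      have hcard : Fintype.card (Fin n) < Fintype.card (Fin (n + 1)) := by
        simp [Fintype.card_fin]
      obtain ⟨x, y, hxy, hfeq⟩ := Fintype.exists_ne_map_eq_of_card_lt
        (fun t : Fin (n + 1) => p.nodeAt t.1) hcard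
      have key : ∀ t₁ t₂ : ℕ, t₁ < t₂ → t₂ ≤ n → p.nodeAt t₁ = p.nodeAt t₂ →
          SPath.fsum (hatw G) p ≤ beta G hn p.last := by
        intro t₁ t₂ hlt2 hle2 heqn
        have hle2' : t₂ ≤ p.len := le_trans hle2 hge
        have hmid : SPath.fsum (hatw G) (p.midPath t₁ t₂) ≤ 0 := by
          apply hatweight_circuit_le hna hnb
          · show (p.midPath t₁ t₂).first = (p.midPath t₁ t₂).last
            rw [SPath.midPath_first, SPath.midPath_last p t₁ t₂ (le_of_lt hlt2) hle2', heqn]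
          · rw [SPath.midPath_len p t₁ t₂ (le_of_lt hlt2) hle2']; omega
          · rw [SPath.midPath_len p t₁ t₂ (le_of_lt hlt2) hle2']; omega
        set q := p.cutPath t₁ t₂ heqn with hq
        have hql : q.len ≤ L := by
          rw [hq, SPath.cutPath_len p t₁ t₂ heqn (le_of_lt hlt2) hle2']
          omega
        have hcut := SPath.fsum_cutPath (hatw G) p t₁ t₂ heqn (le_of_lt hlt2) hle2'
        have hlast : q.last = p.last := SPath.cutPath_last p t₁ t₂ heqn hle2'
        have := ih q hql
        rw [hlast, hcut] at this
        linarith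
      rcases lt_trichotomy x.1 y.1 with hlt2 | heq' | hgt'
      · exact key x.1 y.1 hlt2 (by have := y.2; omega) hfeq
      · exact absurd (Fin.ext heq') hxy
      · exact key y.1 x.1 hgt' (by have := x.2; omega) hfeq.symm

/-- Abel-summation bound on the alpha-part of the weight, for paths staying positive. -/
theorem abel_bound :
    ∀ L : ℕ, ∀ p : SPath G, p.len ≤ L → ∀ k : ℤ, p.shiftsIn k Spos →
      (p.arcs.map (fun e => alpha G e.tgt * (e.shift : ℚ))).sum
        ≤ alpha G p.last * ((k + p.shift - 1 : ℤ) : ℚ) - alpha G p.first * ((k - 1 : ℤ) : ℚ) := by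
  intro L
  induction L with
  | zero =>
    intro p hlen k hk
    have harcs : p.arcs = [] := List.length_eq_zero_iff.mp (by
      have : p.len = p.arcs.length := rfl
      omega)
    have hlast : p.last = p.first := by simp [SPath.last, harcs]
    have hshift : p.shift = 0 := by simp [SPath.shift, harcs]
    rw [harcs, hlast, hshift]
    simp
  | succ L ih =>
    intro p hlen k hk
    cases harcs : p.arcs with
    | nil =>
      have hlast : p.last = p.first := by simp [SPath.last, harcs]
      have hshift : p.shift = 0 := by simp [SPath.shift, harcs]
      rw [hlast, hshift]
      simp
    | cons e l =>
      have h0 : 0 < p.len := by show 0 < p.arcs.length; rw [harcs]; simp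
      have hsrc : e.src = p.first := p.startOk e (by rw [harcs]; rfl)
      have hvalid : G.IsArc e := p.valid e (by rw [harcs]; simp)
      have hpre1 : p.prefixShift 1 = e.shift := by
        show ((p.arcs.take 1).map Arc.shift).sum = e.shift
        rw [harcs]
        simp
      set rest := p.dropPath 1 with hrest
      have hrarcs : rest.arcs = l := by
        show p.arcs.drop 1 = l
        rw [harcs]
        simp
      have hget0 : p.arcs.get ⟨0, h0⟩ = e := by
        have h1 := List.get_of_eq harcs ⟨0, h0⟩
        simpa using h1
      have hrfirst : rest.first = e.tgt := by
        show p.nodeAt 1 = e.tgt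
        rw [show (1:ℕ) = 0 + 1 by rfl, nodeAt_succ p 0 h0, hget0]
      have hrlast : rest.last = p.last := SPath.dropPath_last p 1 h0
      have hrshift : rest.shift = p.shift - e.shift := by
        rw [hrest, SPath.dropPath_shift, hpre1]
      have hrlen : rest.len ≤ L := by
        have : rest.len = p.len - 1 := SPath.dropPath_len p 1
        omega
      have hrshiftsIn : rest.shiftsIn (k + e.shift) Spos := by
        rw [← hpre1]
        exact SPath.dropPath_shiftsIn p 1 hk
      have hk1 : 1 ≤ k := by
        have := hk 0 (by omega)
        rw [SPath.prefixShift_zero, add_zero] at this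
        exact this
      have halpha : alpha G p.first ≤ alpha G e.tgt := by
        have := reaches_of_arc hvalid
        rw [hsrc] at this
        exact alpha_mono this
      have hIH := ih rest hrlen (k + e.shift) hrshiftsIn
      rw [hrarcs, hrfirst, hrlast, hrshift] at hIH
      simp only [List.map_cons, List.sum_cons]
      have hprod : alpha G p.first * ((k - 1 : ℤ) : ℚ) ≤ alpha G e.tgt * ((k - 1 : ℤ) : ℚ) := by
        apply mul_le_mul_of_nonneg_right halpha
        push_cast
        have : (1:ℚ) ≤ (k:ℚ) := by exact_mod_cast hk1
        linarith
      push_cast at hIH hprod ⊢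
      linarith

end Beta

end Periodic
namespace Periodic

variable {n : ℕ} {G : StaticGraph n}

theorem weight_bound (hna : ¬ HasPosWeightCircuit G (Sint n)) (hnb : NoGoodPair G) (hn : 0 < n)
    (p : SPath G) (k : ℤ) (hk : p.shiftsIn k Spos) :
    p.weight ≤ beta G hn p.last + alpha G p.last * ((k + p.shift - 1 : ℤ) : ℚ)
      - alpha G p.first * ((k - 1 : ℤ) : ℚ) := by
  have h1 := claimQ hna hnb hn p.len p (le_refl _)
  have h2 := abel_bound p.len p (le_refl _) k hk
  have h3 := hatweight_eq (G := G) p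
  linarith

/-- A common denominator for all path weights. -/
def denom (G : StaticGraph n) : ℕ := ∏ e ∈ validArcs n, (G.w e).den

theorem denom_pos (G : StaticGraph n) : 0 < denom G :=
  Finset.prod_pos (fun e _ => (G.w e).pos)

theorem arc_weight_denom {e : Arc n} (h : G.IsArc e) :
    ∃ z : ℤ, G.w e * (denom G : ℚ) = z := by
  obtain ⟨c, hc⟩ := Finset.dvd_prod_of_mem (fun e => (G.w e).den) (mem_validArcs h)
  refine ⟨(G.w e).num * (c : ℤ), ?_⟩
  have h1 : (denom G : ℚ) = ((G.w e).den : ℚ) * (c : ℚ) := by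
    rw [denom, hc]
    push_cast
    ring
  rw [h1, ← mul_assoc, Rat.mul_den_eq_num]
  push_cast
  ring

theorem weight_denom_int (p : SPath G) : ∃ z : ℤ, p.weight * (denom G : ℚ) = z := by
  have : ∀ l : List (Arc n), (∀ e ∈ l, G.IsArc e) →
      ∃ z : ℤ, ((l.map G.w).sum) * (denom G : ℚ) = z := by
    intro l
    induction l with
    | nil => intro _; exact ⟨0, by simp⟩
    | cons a t ih =>
      intro hval
      obtain ⟨z1, hz1⟩ := arc_weight_denom (hval a (by simp))
      obtain ⟨z2, hz2⟩ := ih (fun e he => hval e (by simp [he]))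
      refine ⟨z1 + z2, ?_⟩
      simp only [List.map_cons, List.sum_cons]
      push_cast
      rw [add_mul, hz1, hz2]
  exact this p.arcs p.valid

theorem weights_unbounded (p : ℕ → SPath G)
    (hmono : ∀ h, (p h).weight < (p (h + 1)).weight) (B : ℚ) :
    ∃ h : ℕ, B < (p h).weight := by
  set d : ℚ := (denom G : ℚ) with hd
  have hd0 : (0:ℚ) < d := by
    rw [hd]
    exact_mod_cast denom_pos G
  have hstep : ∀ h : ℕ, (p h).weight + 1 / d ≤ (p (h + 1)).weight := by
    intro h
    obtain ⟨za, hza⟩ := weight_denom_int (p h)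
    obtain ⟨zb, hzb⟩ := weight_denom_int (p (h + 1))
    have hlt : za < zb := by
      have := mul_lt_mul_of_pos_right (hmono h) hd0
      rw [hza, hzb] at this
      exact_mod_cast this
    have hz1 : (za : ℚ) + 1 ≤ (zb : ℚ) := by exact_mod_cast hlt
    have h1 : (p h).weight = za / d := by
      field_simp at hza ⊢
      linarith [hza]
    have h2 : (p (h + 1)).weight = zb / d := by
      field_simp at hzb ⊢
      linarith [hzb]
    rw [h1, h2, ← add_div]
    apply div_le_div_of_nonneg_right hz1 (le_of_lt hd0)

  have hlin : ∀ h : ℕ, (p 0).weight + h * (1 / d) ≤ (p h).weight := by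
    intro h
    induction h with
    | zero => simp
    | succ m ihm =>
      have := hstep m
      push_cast
      push_cast at ihm
      linarith
  set x : ℚ := (B - (p 0).weight) * d with hx
  refine ⟨⌈x⌉₊ + 1, ?_⟩
  have h1 : x ≤ (⌈x⌉₊ : ℚ) := Nat.le_ceil x
  have h2 := hlin (⌈x⌉₊ + 1)
  have h3 : ((⌈x⌉₊ + 1 : ℕ) : ℚ) = (⌈x⌉₊ : ℚ) + 1 := by push_cast; ring
  rw [h3] at h2
  have h4 : x * (1 / d) < ((⌈x⌉₊ : ℚ) + 1) * (1 / d) := by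
    apply mul_lt_mul_of_pos_right _ (by positivity)
    linarith
  have h5 : x * (1 / d) = B - (p 0).weight := by
    rw [hx]
    field_simp
  linarith

end Periodic
namespace Periodic

variable {n : ℕ} {G : StaticGraph n}

theorem mem_Spos {k : ℤ} : k ∈ Spos ↔ 0 < k := Iff.rfl

theorem lhs_of_posCircuit (ha : HasPosWeightCircuit G (Sint n)) : HasInfWeightPath G Spos := by
  obtain ⟨q, k, hshifts, hcirc, hshift0, hwpos⟩ := ha
  set κ : ℤ := k + n + 1 with hκ
  have hκpos : ∀ i : ℕ, i ≤ q.arcs.length → 0 < κ + q.prefixShift i := by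
    intro i hi
    have := hshifts i hi
    rw [mem_Sint] at this
    omega
  have hqS : q.shiftsIn κ Spos := fun i hi => hκpos i hi
  refine ⟨(q.first, κ), (q.first, κ), fun h => SPath.npow q hcirc h, fun _ => κ, ?_, ?_, ?_⟩
  · intro h
    apply SPath.shiftsIn_npow
    · intro t _
      rw [hshift0, mul_zero, add_zero]
      exact hqS
    · rw [hshift0, mul_zero, add_zero, mem_Spos]
      show (0:ℤ) < κ
      have := hκpos 0 (by omega)
      rw [SPath.prefixShift_zero] at this
      omega
  · intro h
    constructor
    · rw [SPath.npow_first]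
    · rw [SPath.npow_last, SPath.shift_npow, hshift0, mul_zero, add_zero]
  · intro h
    rw [SPath.weight_npow, SPath.weight_npow]
    have hc : ((h:ℚ)) < ((h+1 : ℕ):ℚ) := by push_cast; linarith
    nlinarith [hwpos, hc]

end Periodic
namespace Periodic

variable {n : ℕ} {G : StaticGraph n}

theorem lhs_of_pair (i₁ i₂ : Fin n) (s₁ s₂ : ℤ)
    (hs11 : 1 ≤ s₁) (hs1n : s₁ ≤ (n:ℤ)) (hs2n : -(n:ℤ) ≤ s₂) (hs21 : s₂ ≤ -1)
    (p' : SPath G) (hp'1 : p'.first = i₁) (hp'2 : p'.last = i₂)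
    (w₁ w₂ : ℚ) (hg₁ : IsGreatest (PCWeights G (Sint n) i₁ s₁) w₁)
    (hg₂ : IsGreatest (PCWeights G (Sint n) i₂ s₂) w₂)
    (hpos : 0 < -(s₂:ℚ) * w₁ + (s₁:ℚ) * w₂) :
    HasInfWeightPath G Spos := by
  obtain ⟨q₁, hq₁S, hq₁f, hq₁l, hq₁sh, hq₁w⟩ := hg₁.1
  obtain ⟨q₂, hq₂S, hq₂f, hq₂l, hq₂sh, hq₂w⟩ := hg₂.1
  have hc₁ : q₁.IsCircuit := by show q₁.first = q₁.last; rw [hq₁f, hq₁l]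
  have hc₂ : q₂.IsCircuit := by show q₂.first = q₂.last; rw [hq₂f, hq₂l]
  set κ : ℤ := (n:ℤ) + 2 * (p'.len:ℤ) + 1 with hκ
  have hn0 : (0:ℤ) ≤ (n:ℤ) := Int.natCast_nonneg n
  have hl0 : (0:ℤ) ≤ (p'.len:ℤ) := Int.natCast_nonneg _
  have hσ := abs_le.mp p'.abs_shift_le
  have hpre' : ∀ i : ℕ, -(p'.len:ℤ) ≤ p'.prefixShift i ∧ p'.prefixShift i ≤ (p'.len:ℤ) := by
    intro i
    exact abs_le.mp (le_trans (p'.abs_prefixShift_le i)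
      (by exact_mod_cast min_le_right i p'.len))
  have hq₁pre : ∀ i : ℕ, i ≤ q₁.arcs.length →
      -(n:ℤ) ≤ q₁.prefixShift i ∧ q₁.prefixShift i ≤ (n:ℤ) := by
    intro i hi
    have := hq₁S i hi
    rwa [zero_add, mem_Sint] at this
  have hq₂pre : ∀ i : ℕ, i ≤ q₂.arcs.length →
      -(n:ℤ) ≤ q₂.prefixShift i ∧ q₂.prefixShift i ≤ (n:ℤ) := by
    intro i hi
    have := hq₂S i hi
    rwa [zero_add, mem_Sint] at this
  have htn1 : ((-s₂).toNat : ℤ) = -s₂ := Int.toNat_of_nonneg (by omega)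
  have htn2 : (s₁.toNat : ℤ) = s₁ := Int.toNat_of_nonneg (by omega)
  have hc1Q : (((-s₂).toNat : ℕ) : ℚ) = -(s₂:ℚ) := by exact_mod_cast htn1
  have hc2Q : ((s₁.toNat : ℕ) : ℚ) = (s₁:ℚ) := by exact_mod_cast htn2
  refine ⟨(i₁, κ), (i₂, κ + p'.shift),
    fun h => (SPath.npow q₁ hc₁ ((-s₂).toNat * h)).append
      (p'.append (SPath.npow q₂ hc₂ (s₁.toNat * h))
        (by rw [SPath.npow_first, hq₂f, hp'2]))
      (by show p'.first = (SPath.npow q₁ hc₁ ((-s₂).toNat * h)).last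
          rw [hp'1, SPath.npow_last, hq₁f]),
    fun _ => κ, fun h => ?_, fun h => ?_, fun h => ?_⟩
  · -- shiftsIn
    have hA : (((-s₂).toNat * h : ℕ):ℤ) = -s₂ * h := by push_cast [htn1]; ring
    have hB : ((s₁.toNat * h : ℕ):ℤ) = s₁ * h := by push_cast [htn2]; ring
    have hzero : (((-s₂).toNat * h : ℕ):ℤ) * s₁ + ((s₁.toNat * h : ℕ):ℤ) * s₂ = 0 := by
      rw [hA, hB]; ring
    have hAnn : 0 ≤ (((-s₂).toNat * h : ℕ):ℤ) * s₁ :=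
      mul_nonneg (by positivity) (by omega)
    apply SPath.shiftsIn_append
    · apply SPath.shiftsIn_npow
      · intro t _
        intro i hi
        rw [hq₁sh, mem_Spos]
        have h1 := hq₁pre i hi
        have h2 : 0 ≤ (t:ℤ) * s₁ := mul_nonneg (by positivity) (by omega)
        linarith [h1.1]
      · rw [hq₁sh, mem_Spos]
        linarith
    · rw [SPath.shift_npow, hq₁sh]
      apply SPath.shiftsIn_append
      · intro i hi
        rw [mem_Spos]
        linarith [(hpre' i).1, hAnn]
      · apply SPath.shiftsIn_npow
        · intro t ht
          intro i hi
          rw [hq₂sh, mem_Spos]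
          have htB : ((t:ℕ):ℤ) < ((s₁.toNat * h : ℕ):ℤ) := by exact_mod_cast ht
          have hs2nn : (0:ℤ) ≤ -s₂ := by omega
          have hkey : -s₂ ≤ (((-s₂).toNat * h : ℕ):ℤ) * s₁ + (t:ℤ) * s₂ := by
            nlinarith [hzero, htB, hs2nn]
          linarith [(hq₂pre i hi).1, hσ.1, hkey]
        · rw [hq₂sh, mem_Spos]
          linarith [hzero, hσ.1]
  · -- endpoints
    constructor
    · rw [Prod.mk.injEq]
      refine ⟨?_, rfl⟩
      rw [SPath.first_append, SPath.npow_first, hq₁f]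
    · rw [Prod.mk.injEq]
      constructor
      · rw [SPath.last_append, SPath.last_append, SPath.npow_last, hq₂f]
      · rw [SPath.shift_append, SPath.shift_append, SPath.shift_npow, SPath.shift_npow,
          hq₁sh, hq₂sh]
        have hA : (((-s₂).toNat * h : ℕ):ℤ) = -s₂ * h := by push_cast [htn1]; ring
        have hB : ((s₁.toNat * h : ℕ):ℤ) = s₁ * h := by push_cast [htn2]; ring
        rw [hA, hB]
        ring
  · -- strictly increasing weights
    simp only [SPath.weight_append, SPath.weight_npow, hq₁w, hq₂w]
    rw [← sub_pos]
    convert hpos using 1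
    push_cast [hc1Q, hc2Q]
    ring

end Periodic

theorem stmt4 {n : ℕ} (G : StaticGraph n) :
    HasInfWeightPath G Spos ↔
      (HasPosWeightCircuit G (Sint n) ∨
        (¬ HasPosWeightCircuit G (Sint n) ∧
          ∃ (i₁ i₂ : Fin n) (s₁ s₂ : ℤ),
            1 ≤ s₁ ∧ s₁ ≤ (n : ℤ) ∧ -(n : ℤ) ≤ s₂ ∧ s₂ ≤ -1 ∧
            (∃ p' : SPath G, p'.first = i₁ ∧ p'.last = i₂) ∧
            ∃ w₁ w₂ : ℚ,
              IsGreatest (PCWeights G (Sint n) i₁ s₁) w₁ ∧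
              IsGreatest (PCWeights G (Sint n) i₂ s₂) w₂ ∧
              0 < -(s₂ : ℚ) * w₁ + (s₁ : ℚ) * w₂)) := by
  constructor
  · intro hLHS
    by_cases ha : HasPosWeightCircuit G (Sint n)
    · exact Or.inl ha
    · right
      refine ⟨ha, ?_⟩
      by_contra hb
      have hnb : NoGoodPair G := by
        intro i₁ i₂ s₁ s₂ h1 h2 h3 h4 hreach w₁ w₂ hg1 hg2
        by_contra hc
        push_neg at hc
        exact hb ⟨i₁, i₂, s₁, s₂, h1, h2, h3, h4, hreach, w₁, w₂, hg1, hg2, hc⟩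
      obtain ⟨u, v, p, k, hS, hends, hmono⟩ := hLHS
      have hn : 0 < n := u.1.pos
      have hk : ∀ h, k h = u.2 := fun h => congrArg Prod.snd (hends h).1
      have hfirst : ∀ h, (p h).first = u.1 := fun h => congrArg Prod.fst (hends h).1
      have hlast : ∀ h, (p h).last = v.1 := fun h => congrArg Prod.fst (hends h).2
      have hshift : ∀ h, (p h).shift = v.2 - u.2 := by
        intro h
        have h5 : k h + (p h).shift = v.2 := congrArg Prod.snd (hends h).2
        have h6 := hk h
        omega
      obtain ⟨h, hB⟩ := weights_unbounded p hmono
        (beta G hn v.1 + alpha G v.1 * ((u.2 + (v.2 - u.2) - 1 : ℤ):ℚ)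
          - alpha G u.1 * ((u.2 - 1 : ℤ):ℚ))
      have hbd := weight_bound ha hnb hn (p h) (k h) (hS h)
      rw [hfirst h, hlast h, hshift h, hk h] at hbd
      linarith [hB, hbd]
  · rintro (ha | ⟨hna, i₁, i₂, s₁, s₂, h1, h2, h3, h4, ⟨p', hp'1, hp'2⟩, w₁, w₂, hg1, hg2, hpos⟩)
    · exact lhs_of_posCircuit ha
    · exact lhs_of_pair i₁ i₂ s₁ s₂ h1 h2 h3 h4 p' hp'1 hp'2 w₁ w₂ hg1 hg2 hpos
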